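/- Let R be a commutative ring. The following are equivalent: (1) R is τ_q-coherent, i.e., every τ_q-finitely generated ideal of R is τ_q-finitely presented; (2) the intersection of any two finitely generated ideals of R is τ_q-finitely generated, and for every b ∈ R the annihilator ideal (0 :_R b) = {r ∈ R : rb = 0} is τ_q-finitely generated; (3) for every b ∈ R and every finitely generated ideal I of R, the ideal (I :_R b) = {r ∈ R : rb ∈ I} is τ_q-finitely generated. -/

import Mathlib

open Polynomial TensorProduct

universe u v

/-- An ideal is *semi-regular* if it contains a finitely generated dense subideal
(an ideal is *dense* if its annihilator is zero). -/
def Ideal.IsSemiregular {R : Type*} [CommRing R] (I : Ideal R) : Prop :=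
  ∃ J : Ideal R, J ≤ I ∧ J.FG ∧ Submodule.annihilator J = ⊥

/-- A module is *Q-torsion* if every element is annihilated by some finitely
generated semi-regular ideal. -/
def IsQTorsion (R : Type*) (M : Type*) [CommRing R] [AddCommGroup M] [Module R M] : Prop :=
  ∀ m : M, ∃ I : Ideal R, I.FG ∧ I.IsSemiregular ∧ ∀ a ∈ I, a • m = 0

/-- A module is *τ_q-finitely generated* if it has a finitely generated submodule
with Q-torsion quotient. -/
def IsTauQFG (R : Type u) (M : Type v) [CommRing R] [AddCommGroup M] [Module R M] : Prop :=
  ∃ N : Submodule R M, N.FG ∧ IsQTorsion R (M ⧸ N)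

/-- A module is *τ_q-finitely presented* if it receives a linear map from a finitely
presented module with Q-torsion kernel and cokernel. -/
def IsTauQFP (R : Type u) (M : Type v) [CommRing R] [AddCommGroup M] [Module R M] : Prop :=
  ∃ (N : Type v) (_ : AddCommGroup N) (_ : Module R N) (f : N →ₗ[R] M),
    Module.FinitePresentation R N ∧ IsQTorsion R (LinearMap.ker f) ∧
      IsQTorsion R (M ⧸ LinearMap.range f)

/-!
Semi-regular ideals form a Gabriel filter: they are closed under products, and `J` is
semi-regular as soon as every conductor `(J : a)`, `a ∈ I`, is, for some semi-regular `I`.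
Hence the `Q`-saturation of submodules is a closure operator commuting with `comap` and with
finite intersections, and a submodule is `τ_q`-finitely generated iff it lies in the saturation
of one of its finitely generated submodules; this property is closed under extensions.

(1 ⇒ 2) A Schanuel-type argument: if `M` is finitely generated and `f : M → N` is onto a
`τ_q`-finitely presented module, then `ker f` is `τ_q`-finitely generated. Apply it to
`I ⊕ J → I + J` and to `R → Rb`.
(2 ⇒ 3) `(I :_R b)` is an extension of `I ∩ Rb` by `(0 :_R b)`.
(3 ⇒ 1) The kernel of `x ↦ ∑ xᵢ vᵢ : Rⁿ⁺¹ → R` is an extension of `(Rv₁ + ⋯ + Rvₙ :_R v₀)` by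
the kernel for `v₁, …, vₙ`. By induction, a `τ_q`-finitely generated ideal thus receives a map
from a finite free module with `τ_q`-finitely generated kernel and `Q`-torsion cokernel.
-/

namespace Ideal

variable {R : Type*} [CommRing R] {I J : Ideal R}

theorem isSemiregular_top : (⊤ : Ideal R).IsSemiregular :=
  ⟨⊤, le_rfl, ⟨{1}, by simp⟩, eq_bot_iff.mpr fun r hr => by
    simpa using Submodule.mem_annihilator.mp hr 1 Submodule.mem_top⟩

theorem IsSemiregular.mono (hI : I.IsSemiregular) (hIJ : I ≤ J) : J.IsSemiregular :=
  let ⟨I₀, hI₀, hfg, hann⟩ := hI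
  ⟨I₀, hI₀.trans hIJ, hfg, hann⟩

theorem IsSemiregular.exists_fg_le (hI : I.IsSemiregular) :
    ∃ J ≤ I, J.FG ∧ J.IsSemiregular :=
  let ⟨J, hJ, hfg, hann⟩ := hI
  ⟨J, hJ, hfg, J, le_rfl, hfg, hann⟩

theorem IsSemiregular.mul (hI : I.IsSemiregular) (hJ : J.IsSemiregular) :
    (I * J).IsSemiregular := by
  obtain ⟨I₀, hI₀, hIfg, hIann⟩ := hI
  obtain ⟨J₀, hJ₀, hJfg, hJann⟩ := hJ
  refine ⟨I₀ * J₀, mul_mono hI₀ hJ₀, hIfg.mul hJfg, eq_bot_iff.mpr fun r hr => ?_⟩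
  -- `r • I₀ • J₀ = 0` forces `r • I₀ ⊆ ann J₀ = 0`, hence `r ∈ ann I₀ = 0`.
  have hrI₀ : ∀ x ∈ I₀, r * x = 0 := fun x hx => by
    have : r * x ∈ J₀.annihilator := Submodule.mem_annihilator.mpr fun y hy => by
      simpa [mul_assoc] using Submodule.mem_annihilator.mp hr _ (mul_mem_mul hx hy)
    simpa [hJann] using this
  have : r ∈ I₀.annihilator := Submodule.mem_annihilator.mpr hrI₀
  simpa [hIann] using this

theorem IsSemiregular.inf (hI : I.IsSemiregular) (hJ : J.IsSemiregular) :
    (I ⊓ J).IsSemiregular :=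
  (hI.mul hJ).mono mul_le_inf

theorem _root_.Submodule.isSemiregular_colon_of_finite {M : Type*} [AddCommGroup M] [Module R M]
    (N : Submodule R M) {s : Set M} (hs : s.Finite)
    (h : ∀ x ∈ s, (N.colon {x}).IsSemiregular) : (N.colon s).IsSemiregular := by
  induction s, hs using Set.Finite.induction_on with
  | empty => simpa [Submodule.colon_empty] using isSemiregular_top
  | @insert x s _ _ ih =>
    rw [Set.insert_eq, Submodule.colon_union]
    exact (h x (by simp)).inf (ih fun y hy => h y (by simp [hy]))

theorem IsSemiregular.of_colon (hI : I.IsSemiregular)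
    (h : ∀ a ∈ I, (J.colon {a}).IsSemiregular) : J.IsSemiregular := by
  obtain ⟨I₀, hI₀, ⟨s, rfl⟩, hann⟩ := hI
  have hcolon : (J.colon (s : Set R)).IsSemiregular :=
    J.isSemiregular_colon_of_finite s.finite_toSet fun a ha => h a (hI₀ (subset_span ha))
  refine (hcolon.mul ⟨span s, le_rfl, ⟨s, rfl⟩, hann⟩).mono (mul_le.mpr fun r hr x hx => ?_)
  rw [← Submodule.colon_span] at hr
  exact Submodule.mem_colon.mp hr x hx

end Ideal

namespace Submodule

variable {R M M' : Type*} [CommRing R] [AddCommGroup M] [Module R M]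
  [AddCommGroup M'] [Module R M'] {N N' : Submodule R M}

/-- The `Q`-saturation of `N`. By `exists_fg_smul_mem_iff_mem_qClosure` its elements are those
killed modulo `N` by an ideal of `Q`, although the conductor `N.colon {x}` itself need not be
finitely generated. -/
def qClosure (N : Submodule R M) : Submodule R M where
  carrier := {x | (N.colon {x}).IsSemiregular}
  zero_mem' := by simpa [colon_singleton_zero] using Ideal.isSemiregular_top
  add_mem' {x y} hx hy := (Ideal.IsSemiregular.inf hx hy).mono fun r hr => by
    simp only [Ideal.mem_inf, mem_colon_singleton] at hr ⊢
    simpa [smul_add] using N.add_mem hr.1 hr.2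
  smul_mem' c x hx := Ideal.IsSemiregular.mono hx fun r hr => by
    simp only [mem_colon_singleton] at hr ⊢
    simpa [smul_comm r c] using N.smul_mem c hr

theorem mem_qClosure {x : M} : x ∈ N.qClosure ↔ (N.colon {x}).IsSemiregular := Iff.rfl

theorem le_qClosure (N : Submodule R M) : N ≤ N.qClosure := fun x hx => by
  simpa [mem_qClosure, (colon_eq_top_iff_subset _).mpr (Set.singleton_subset_iff.mpr hx)]
    using Ideal.isSemiregular_top

theorem qClosure_mono (h : N ≤ N') : N.qClosure ≤ N'.qClosure := fun _ hx =>
  Ideal.IsSemiregular.mono hx (colon_mono h le_rfl)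

theorem qClosure_qClosure (N : Submodule R M) : N.qClosure.qClosure = N.qClosure := by
  refine le_antisymm (fun x hx => ?_) (le_qClosure _)
  refine Ideal.IsSemiregular.of_colon (I := N.qClosure.colon {x}) hx fun a ha => ?_
  have hax : (N.colon {x}).colon {a} = N.colon {a • x} := by
    ext r; simp [mem_colon_singleton, mul_smul]
  rw [hax]
  exact mem_colon_singleton.mp ha

theorem qClosure_inf (N N' : Submodule R M) :
    (N ⊓ N').qClosure = N.qClosure ⊓ N'.qClosure :=
  le_antisymm (le_inf (qClosure_mono inf_le_left) (qClosure_mono inf_le_right))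
    fun x ⟨hx, hx'⟩ => by simpa [mem_qClosure, inf_colon] using Ideal.IsSemiregular.inf hx hx'

theorem comap_qClosure (f : M' →ₗ[R] M) (N : Submodule R M) :
    N.qClosure.comap f = (N.comap f).qClosure := by
  ext x
  have : (N.comap f).colon {x} = N.colon {f x} := by ext r; simp [mem_colon_singleton]
  rw [mem_comap, mem_qClosure, mem_qClosure, this]

theorem map_qClosure_le (f : M →ₗ[R] M') (N : Submodule R M) :
    N.qClosure.map f ≤ (N.map f).qClosure := by
  rw [map_le_iff_le_comap, comap_qClosure]
  exact qClosure_mono (le_comap_map f N)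

theorem exists_fg_smul_mem_iff_mem_qClosure {x : M} :
    (∃ I : Ideal R, I.FG ∧ I.IsSemiregular ∧ ∀ a ∈ I, a • x ∈ N) ↔ x ∈ N.qClosure := by
  refine ⟨fun ⟨I, _, hI, hIx⟩ => hI.mono fun a ha => mem_colon_singleton.mpr (hIx a ha),
    fun hx => ?_⟩
  obtain ⟨I, hI, hfg, hIsr⟩ := Ideal.IsSemiregular.exists_fg_le hx
  exact ⟨I, hfg, hIsr, fun a ha => mem_colon_singleton.mp (hI ha)⟩

end Submodule

open Submodule

section QTorsion

variable {R M : Type*} [CommRing R] [AddCommGroup M] [Module R M]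

theorem isQTorsion_iff_qClosure_bot :
    IsQTorsion R M ↔ (⊥ : Submodule R M).qClosure = ⊤ := by
  rw [eq_top_iff']
  exact forall_congr' fun m => by
    simpa only [mem_bot] using exists_fg_smul_mem_iff_mem_qClosure (N := ⊥) (x := m)

theorem isQTorsion_quotient_iff (N : Submodule R M) :
    IsQTorsion R (M ⧸ N) ↔ N.qClosure = ⊤ := by
  rw [isQTorsion_iff_qClosure_bot, ← (comap_injective_of_surjective N.mkQ_surjective).eq_iff,
    comap_qClosure, comap_bot, ker_mkQ, comap_top]

theorem isQTorsion_submodule_iff (S : Submodule R M) :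
    IsQTorsion R S ↔ S ≤ (⊥ : Submodule R M).qClosure := by
  rw [isQTorsion_iff_qClosure_bot, ← comap_subtype_eq_top, comap_qClosure, comap_bot, ker_subtype]

theorem isTauQFG_iff :
    IsTauQFG R M ↔ ∃ N : Submodule R M, N.FG ∧ N.qClosure = ⊤ :=
  exists_congr fun N => and_congr_right fun _ => isQTorsion_quotient_iff N

end QTorsion

namespace Submodule

variable {R M M' : Type*} [CommRing R] [AddCommGroup M] [Module R M]
  [AddCommGroup M'] [Module R M'] {S : Submodule R M}

def TauQFG (S : Submodule R M) : Prop :=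
  ∃ S₀ ≤ S, S₀.FG ∧ S ≤ S₀.qClosure

theorem tauQFG_iff : S.TauQFG ↔ IsTauQFG R S := by
  rw [isTauQFG_iff]
  constructor
  · rintro ⟨S₀, hS₀, hfg, hS⟩
    refine ⟨S₀.comap S.subtype, ?_, ?_⟩
    · rwa [← fg_map_iff S.subtype S.injective_subtype, map_comap_subtype, inf_eq_right.mpr hS₀]
    · rwa [← comap_qClosure, comap_subtype_eq_top]
  · rintro ⟨N, hfg, hN⟩
    refine ⟨N.map S.subtype, map_subtype_le S N, hfg.map _, ?_⟩
    rwa [← comap_subtype_eq_top, comap_qClosure, comap_map_eq_of_injective S.injective_subtype]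

theorem FG.tauQFG (h : S.FG) : S.TauQFG :=
  ⟨S, le_rfl, h, le_qClosure S⟩

theorem tauQFG_of_le_qClosure_bot (h : S ≤ (⊥ : Submodule R M).qClosure) : S.TauQFG :=
  ⟨⊥, bot_le, fg_bot, h⟩

theorem TauQFG.map (h : S.TauQFG) (f : M →ₗ[R] M') : (S.map f).TauQFG := by
  obtain ⟨S₀, hS₀, hfg, hS⟩ := h
  exact ⟨S₀.map f, map_mono hS₀, hfg.map f, (map_mono hS).trans (map_qClosure_le f S₀)⟩

theorem exists_fg_le_map_eq {B : Submodule R M'} (hB : B.FG) (f : M →ₗ[R] M')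
    (hBS : B ≤ S.map f) : ∃ B₁ ≤ S, B₁.FG ∧ B₁.map f = B := by
  induction B, hB using fg_induction with
  | singleton y =>
    obtain ⟨x, hx, rfl⟩ := hBS (mem_span_singleton_self y)
    exact ⟨R ∙ x, (span_singleton_le_iff_mem x S).mpr hx, fg_span_singleton x,
      by simp [map_span]⟩
  | sup B B' _ _ ih ih' =>
    obtain ⟨B₁, hB₁, hfg, rfl⟩ := ih (le_sup_left.trans hBS)
    obtain ⟨B₁', hB₁', hfg', rfl⟩ := ih' (le_sup_right.trans hBS)
    exact ⟨B₁ ⊔ B₁', sup_le hB₁ hB₁', hfg.sup hfg', map_sup B₁ B₁' f⟩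

theorem TauQFG.of_inf_ker_of_map (f : M →ₗ[R] M') (hker : (S ⊓ LinearMap.ker f).TauQFG)
    (hmap : (S.map f).TauQFG) : S.TauQFG := by
  obtain ⟨A₀, hA₀, hAfg, hA⟩ := hker
  obtain ⟨B₀, hB₀, hBfg, hB⟩ := hmap
  obtain ⟨B₁, hB₁, hB₁fg, rfl⟩ := exists_fg_le_map_eq hBfg f hB₀
  refine ⟨A₀ ⊔ B₁, sup_le (hA₀.trans inf_le_left) hB₁, hAfg.sup hB₁fg, fun x hxS => ?_⟩
  have hx : x ∈ (B₁ ⊔ LinearMap.ker f).qClosure ⊓ S.qClosure := by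
    rw [← comap_map_eq, ← comap_qClosure]
    exact ⟨hB (mem_map_of_mem hxS), le_qClosure S hxS⟩
  rw [← qClosure_inf, sup_inf_assoc_of_le _ hB₁, inf_comm] at hx
  refine qClosure_qClosure (A₀ ⊔ B₁) ▸ qClosure_mono (sup_le ?_ ?_) hx
  · exact le_sup_right.trans (le_qClosure _)
  · exact hA.trans (qClosure_mono le_sup_left)

theorem exists_fg_le_qClosure_of_fg {N T : Submodule R M} (hT : T.FG) (hTN : T ≤ N.qClosure) :
    ∃ N₀ ≤ N, N₀.FG ∧ T ≤ N₀.qClosure := by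
  induction T, hT using fg_induction with
  | singleton x =>
    obtain ⟨J, hJ, hfg, hJsr⟩ :=
      Ideal.IsSemiregular.exists_fg_le (hTN (mem_span_singleton_self x))
    refine ⟨map (LinearMap.toSpanSingleton R M x) J, ?_, Submodule.FG.map _ hfg, ?_⟩
    · rintro _ ⟨a, ha, rfl⟩
      exact mem_colon_singleton.mp (hJ ha)
    · refine (span_singleton_le_iff_mem x _).mpr (hJsr.mono fun a ha => ?_)
      exact mem_colon_singleton.mpr (mem_map_of_mem ha)
  | sup T T' _ _ ih ih' =>
    obtain ⟨N₀, hN₀, hfg, hT⟩ := ih (le_sup_left.trans hTN)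
    obtain ⟨N₀', hN₀', hfg', hT'⟩ := ih' (le_sup_right.trans hTN)
    exact ⟨N₀ ⊔ N₀', sup_le hN₀ hN₀', hfg.sup hfg',
      sup_le (hT.trans (qClosure_mono le_sup_left)) (hT'.trans (qClosure_mono le_sup_right))⟩

theorem tauQFG_of_qClosure_eq_top [Module.Finite R M] (h : S.qClosure = ⊤) : S.TauQFG := by
  obtain ⟨S₀, hS₀, hfg, hS⟩ := exists_fg_le_qClosure_of_fg Module.Finite.fg_top h.ge
  exact ⟨S₀, hS₀, hfg, le_top.trans hS⟩

theorem TauQFG.inf_ker_of_finitePresentation (h : S.TauQFG) (f : M →ₗ[R] M')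
    [Module.FinitePresentation R M'] (hf : S.map f = ⊤) : (S ⊓ LinearMap.ker f).TauQFG := by
  obtain ⟨S₀, hS₀, hfg, hS⟩ := h
  obtain ⟨B₁, hB₁, hB₁fg, hB₁f⟩ := exists_fg_le_map_eq Module.Finite.fg_top f hf.ge
  set S₁ := S₀ ⊔ B₁
  have : Module.Finite R S₁ := Module.Finite.iff_fg.mpr (hfg.sup hB₁fg)
  have hsurj : Function.Surjective (f ∘ₗ S₁.subtype) := by
    rw [← LinearMap.range_eq_top, LinearMap.range_comp, range_subtype, eq_top_iff, ← hB₁f]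
    exact map_mono le_sup_right
  have hker := (Module.FinitePresentation.fg_ker _ hsurj).map S₁.subtype
  rw [LinearMap.ker_comp, map_comap_subtype] at hker
  refine ⟨S₁ ⊓ LinearMap.ker f, inf_le_inf_right _ (sup_le hS₀ hB₁), hker, ?_⟩
  rw [qClosure_inf]
  exact inf_le_inf (hS.trans (qClosure_mono le_sup_left)) (le_qClosure _)

end Submodule

open LinearMap

section Presentations

variable {R : Type*} [CommRing R]

theorem tauQFG_ker_of_surjective {M N : Type*} [AddCommGroup M] [Module R M] [Module.Finite R M]
    [AddCommGroup N] [Module R N] (f : M →ₗ[R] N) (hf : Function.Surjective f)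
    (hN : IsTauQFP R N) : (ker f).TauQFG := by
  obtain ⟨P, _, _, g, hP, hkerg, hcokerg⟩ := hN
  rw [isQTorsion_submodule_iff] at hkerg
  rw [isQTorsion_quotient_iff] at hcokerg
  -- The pullback of `f` and `g`, an extension of `f⁻¹(range g)` by `ker g`.
  set D := ker (f ∘ₗ fst R M P - g ∘ₗ snd R M P)
  have mem_D (x : M) (p : P) : (x, p) ∈ D ↔ f x = g p := by simp [D, sub_eq_zero]
  have hD : D.TauQFG := by
    refine .of_inf_ker_of_map (fst R M P) (tauQFG_of_le_qClosure_bot ?_) ?_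
    · rintro ⟨x, p⟩ ⟨hxp, hx⟩
      obtain rfl : x = 0 := hx
      have hp : p ∈ ker g := by simpa [mem_D, eq_comm] using hxp
      simpa using map_qClosure_le (inr R M P) ⊥ (mem_map_of_mem (hkerg hp))
    · have hDW : D.map (fst R M P) = (range g).comap f := by
        ext x; simp [mem_D, eq_comm]
      rw [hDW]
      exact tauQFG_of_qClosure_eq_top (by rw [← comap_qClosure, hcokerg, comap_top])
  have hDsnd : D.map (snd R M P) = ⊤ := eq_top_iff.mpr fun p _ =>
    let ⟨x, hx⟩ := hf (g p)
    ⟨(x, p), (mem_D x p).mpr hx, rfl⟩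
  have hker : ker f = (D ⊓ ker (snd R M P)).map (fst R M P) := by
    ext x; simp [mem_D]
  exact hker ▸ (hD.inf_ker_of_finitePresentation (snd R M P) hDsnd).map (fst R M P)

theorem tauQFG_ker_of_isTauQFP_range {M N : Type*} [AddCommGroup M] [Module R M]
    [Module.Finite R M] [AddCommGroup N] [Module R N] (f : M →ₗ[R] N)
    (hf : IsTauQFP R (range f)) : (ker f).TauQFG :=
  ker_rangeRestrict f ▸ tauQFG_ker_of_surjective _ f.surjective_rangeRestrict hf

theorem isTauQFP_of_tauQFG_ker {F M : Type v} [AddCommGroup F] [Module R F]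
    [Module.FinitePresentation R F] [AddCommGroup M] [Module R M] (S : Submodule R M)
    (φ : F →ₗ[R] M) (hφS : range φ ≤ S) (hSφ : S ≤ (range φ).qClosure)
    (hker : (ker φ).TauQFG) : IsTauQFP R S := by
  obtain ⟨K₀, hK₀, hfg, hK⟩ := hker
  set ψ := φ.codRestrict S fun x => hφS (mem_range_self φ x)
  have hK₀ψ : K₀ ≤ ker ψ := by rwa [ker_codRestrict]
  refine ⟨F ⧸ K₀, _, _, K₀.liftQ ψ hK₀ψ,
    Module.finitePresentation_of_surjective K₀.mkQ K₀.mkQ_surjective (by rwa [K₀.ker_mkQ]),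
    ?_, ?_⟩
  · rw [isQTorsion_submodule_iff, ker_liftQ, ker_codRestrict, ← K₀.mkQ_map_self]
    exact (map_mono hK).trans (map_qClosure_le _ _)
  · rw [isQTorsion_quotient_iff, range_liftQ, range_codRestrict, ← comap_qClosure,
      comap_subtype_eq_top]
    exact hSφ

end Presentations

section Coherence

variable {R : Type*} [CommRing R]

theorem tauQFG_ker_coprod_toSpanSingleton {F : Type*} [AddCommGroup F] [Module R F]
    (φ : F →ₗ[R] R) (b : R) (hφ : (ker φ).TauQFG)
    (hb : ((range φ).comap (toSpanSingleton R R b)).TauQFG) :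
    (ker ((toSpanSingleton R R b).coprod φ)).TauQFG := by
  refine .of_inf_ker_of_map (fst R R F) ?_ ?_
  · have : ker ((toSpanSingleton R R b).coprod φ) ⊓ ker (fst R R F) =
        (ker φ).map (inr R R F) := by
      ext ⟨r, x⟩
      simp only [mem_inf, mem_ker, coprod_apply, toSpanSingleton_apply, fst_apply, mem_map,
        coe_inr, Prod.mk.injEq]
      constructor
      · rintro ⟨hx, rfl⟩
        exact ⟨x, by simpa using hx, rfl, rfl⟩
      · rintro ⟨x, hx, rfl, rfl⟩
        simpa using hx
    exact this ▸ hφ.map (inr R R F)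
  · have : (ker ((toSpanSingleton R R b).coprod φ)).map (fst R R F) =
        (range φ).comap (toSpanSingleton R R b) := by
      ext r
      simp only [mem_map, mem_ker, coprod_apply, toSpanSingleton_apply, fst_apply, mem_comap,
        mem_range, Prod.exists, exists_and_right, exists_eq_right]
      constructor
      · rintro ⟨x, hx⟩
        exact ⟨-x, by rw [map_neg, neg_eq_iff_add_eq_zero, add_comm, hx]⟩
      · rintro ⟨x, hx⟩
        exact ⟨-x, by rw [map_neg, hx, add_neg_cancel]⟩
    exact this ▸ hb

theorem tauQFG_ker_linearCombination
    (h : ∀ (b : R) (I : Ideal R), I.FG → IsTauQFG R ↥(comap (toSpanSingleton R R b) I))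
    {n : ℕ} (v : Fin n → R) : (ker (Fintype.linearCombination R v)).TauQFG := by
  induction n with
  | zero => exact (Subsingleton.elim ⊥ (ker (Fintype.linearCombination R v))) ▸ fg_bot.tauQFG
  | succ n ih =>
    set e := Fin.consLinearEquiv R fun _ : Fin (n + 1) => R
    have he : Fintype.linearCombination R v ∘ₗ e.toLinearMap =
        (toSpanSingleton R R (v 0)).coprod (Fintype.linearCombination R (Fin.tail v)) := by
      refine LinearMap.ext fun ⟨r, x⟩ => ?_
      simp [e, Fintype.linearCombination_apply, Fin.sum_univ_succ, Fin.tail]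
    have hrange : (range (Fintype.linearCombination R (Fin.tail v))).FG := by
      rw [Fintype.range_linearCombination]
      exact fg_span (Set.finite_range _)
    have := (tauQFG_ker_coprod_toSpanSingleton _ (v 0) (ih _)
      (tauQFG_iff.mpr (h _ _ hrange))).map e.toLinearMap
    rwa [← he, ker_comp, map_comap_eq_of_surjective e.surjective] at this

theorem tauQFG_ker_of_isTauQFP_ideals (h : ∀ I : Ideal R, IsTauQFG R I → IsTauQFP R I)
    {M : Type*} [AddCommGroup M] [Module R M] [Module.Finite R M] (f : M →ₗ[R] R) :
    (ker f).TauQFG := by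
  refine tauQFG_ker_of_isTauQFP_range f (h _ (tauQFG_iff.mp (FG.tauQFG ?_)))
  rw [range_eq_map]
  exact Module.Finite.fg_top.map f

theorem map_ker_coprod_subtype {M : Type*} [AddCommGroup M] [Module R M] (I J : Submodule R M) :
    (ker (I.subtype.coprod J.subtype)).map (I.subtype ∘ₗ fst R I J) = I ⊓ J := by
  ext z
  simp only [mem_map, mem_ker, coprod_apply, subtype_apply, coe_comp, Function.comp_apply,
    fst_apply, Prod.exists, mem_inf]
  constructor
  · rintro ⟨x, y, hxy, rfl⟩
    exact ⟨x.2, by simp [eq_neg_of_add_eq_zero_left hxy]⟩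
  · rintro ⟨hzI, hzJ⟩
    exact ⟨⟨z, hzI⟩, ⟨-z, neg_mem hzJ⟩, add_neg_cancel z, rfl⟩

end Coherence

/-- For a commutative ring `R` the following are equivalent:
(1) `R` is τ_q-coherent (every τ_q-finitely generated ideal is τ_q-finitely
presented);
(2) the intersection of any two finitely generated ideals is τ_q-finitely
generated, and the annihilator `(0 :_R b) = {r | r·b = 0}` is τ_q-finitely
generated for every `b ∈ R`;
(3) `(I :_R b) = {r | r·b ∈ I}` is τ_q-finitely generated for every `b ∈ R` and
every finitely generated ideal `I`. -/
theorem statement17 (R : Type u) [CommRing R] :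
    List.TFAE
      [∀ I : Ideal R, IsTauQFG R I → IsTauQFP R I,
      (∀ I J : Ideal R, I.FG → J.FG → IsTauQFG R ↥(I ⊓ J)) ∧
        (∀ b : R, IsTauQFG R ↥(LinearMap.ker (LinearMap.toSpanSingleton R R b))),
      ∀ (b : R) (I : Ideal R), I.FG →
        IsTauQFG R ↥(Submodule.comap (LinearMap.toSpanSingleton R R b) I)] := by
  tfae_have 1 → 2
  | h1 => by
    refine ⟨fun I J hI hJ => ?_, fun b => tauQFG_iff.mp (tauQFG_ker_of_isTauQFP_ideals h1 _)⟩
    have := Module.Finite.iff_fg.mpr hI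
    have := Module.Finite.iff_fg.mpr hJ
    rw [← tauQFG_iff, ← map_ker_coprod_subtype]
    exact (tauQFG_ker_of_isTauQFP_ideals h1 _).map _
  tfae_have 2 → 3
  | ⟨hinf, hann⟩, b, I, hI => by
    rw [← tauQFG_iff]
    refine .of_inf_ker_of_map (toSpanSingleton R R b) ?_ ?_
    · rw [inf_eq_right.mpr (ker_le_comap _)]
      exact tauQFG_iff.mpr (hann b)
    · rw [map_comap_eq, ← LinearMap.span_singleton_eq_range, inf_comm]
      exact tauQFG_iff.mpr (hinf I _ hI (fg_span_singleton b))
  tfae_have 3 → 1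
  | h3, I, hI => by
    obtain ⟨I₀, hI₀, hfg, hI⟩ := tauQFG_iff.mpr hI
    obtain ⟨n, v, rfl⟩ := fg_iff_exists_fin_generating_family.mp hfg
    have hrange := Fintype.range_linearCombination R v
    exact isTauQFP_of_tauQFG_ker I (Fintype.linearCombination R v) (hrange ▸ hI₀) (hrange ▸ hI)
      (tauQFG_ker_linearCombination h3 v)
  tfae_finish
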